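/- Let p > 0 and let ω be the σ-finite Borel measure on (-p, p] with density dω(x) = dx/(p² - x²). Then ω is U-invariant: for every bounded Borel function φ on (-p, p] that is continuous off a countable set, ∫_{(-p,p]} φ(U(x)) dω(x) = ∫_{(-p,p]} φ(x) dω(x), where U(x) = p·{-p/x}_2 for x ≠ 0 and U(0) = 0. -/

import Mathlib

/-!
On each piece `{x | gaussDigit p x = j}` with `j ≠ 0`, `U = gaussMap p` is the Möbius map
`x ↦ -p²/x - 2pj`, whose inverse branch `t ↦ -p²/(t + 2pj)` maps `(-p, p]` onto that piece.
Changing variables branch by branch turns `∫ f ∘ U dω` into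
`∫ f(t) ∑_{j ≠ 0} 1/((t + 2pj)² - p²) dt`. Since `1/((t + 2pj)² - p²) = g j - g (j + 1)` with
`g j = 1/(2p(t + 2pj - p))`, the sum over all of `ℤ` telescopes to `0`, so the sum over `j ≠ 0`
is minus the `j = 0` term, i.e. `1/(p² - t²)`.
-/

open MeasureTheory

/-- `{u}₂`: the unique element of `(-1, 1]` with `u - {u}₂ ∈ 2ℤ`. -/
noncomputable def frac2 (u : ℝ) : ℝ := u - 2 * ⌈(u - 1) / 2⌉

open Set Filter Topology
open scoped ENNReal

lemma ceil_sub_one_div_two_eq_iff {u : ℝ} {j : ℤ} :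
    ⌈(u - 1) / 2⌉ = j ↔ u - 2 * j ∈ Ioc (-1) 1 := by
  rw [Int.ceil_eq_iff, mem_Ioc]
  constructor <;> rintro ⟨h₁, h₂⟩ <;> constructor <;> linarith

lemma frac2_mem_Ioc (u : ℝ) : frac2 u ∈ Ioc (-1) 1 :=
  ceil_sub_one_div_two_eq_iff.mp rfl

lemma frac2_eq_sub {u : ℝ} {j : ℤ} (h : u - 2 * j ∈ Ioc (-1) 1) : frac2 u = u - 2 * j := by
  rw [frac2, ceil_sub_one_div_two_eq_iff.mpr h]

lemma measurable_frac2 : Measurable frac2 := by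
  unfold frac2; fun_prop

lemma div_mem_Ioc_neg_one_one {p t : ℝ} (hp : 0 < p) (ht : t ∈ Ioc (-p) p) :
    t / p ∈ Ioc (-1) 1 :=
  ⟨by rw [lt_div_iff₀ hp]; linarith [ht.1], by rw [div_le_one hp]; exact ht.2⟩

lemma neg_div_mem_Ioc_iff {p : ℝ} (hp : 0 < p) (x : ℝ) :
    -p / x ∈ Ioc (-1) 1 ↔ x ∉ Ioc (-p) p \ {0} := by
  simp only [Set.mem_sdiff, mem_Ioc, mem_singleton_iff, not_and, not_not]
  rcases lt_trichotomy x 0 with hx | rfl | hx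
  · have : 0 < -p / x := div_pos_of_neg_of_neg (by linarith) hx
    rw [div_le_one_of_neg hx]
    constructor
    · rintro ⟨-, h⟩ ⟨h', -⟩; linarith
    · intro h; exact ⟨by linarith, by by_contra! h'; exact hx.ne (h ⟨h', by linarith⟩)⟩
  · simp
  · have : 0 < p / x := div_pos hp hx
    rw [neg_div, neg_lt_neg_iff, div_lt_one hx]
    constructor
    · rintro ⟨h, -⟩ ⟨-, h'⟩; linarith
    · intro h; exact ⟨by by_contra! h'; exact hx.ne' (h ⟨by linarith, h'⟩), by linarith⟩

lemma hasSum_sub_succ_of_antitone {g : ℕ → ℝ} (hg : Antitone g)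
    (hlim : Tendsto g atTop (𝓝 0)) : HasSum (fun n => g n - g (n + 1)) (g 0) := by
  rw [hasSum_iff_tendsto_nat_of_nonneg fun n => sub_nonneg.2 (hg n.le_succ)]
  simp_rw [Finset.sum_range_sub']
  simpa using hlim.const_sub (g 0)

lemma hasSum_int_sub_succ {g : ℤ → ℝ} (hg : ∀ j ≠ 0, g (j + 1) ≤ g j)
    (htop : Tendsto g atTop (𝓝 0)) (hbot : Tendsto g atBot (𝓝 0)) :
    HasSum (fun j => g j - g (j + 1)) 0 := by
  have hpos : HasSum (fun n : ℕ => g (n + 1) - g (n + 1 + 1)) (g 1) := by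
    convert hasSum_sub_succ_of_antitone (g := fun n : ℕ => g (n + 1))
      (antitone_nat_of_succ_le fun n => ?_) ?_ using 3
    · push_cast; ring_nf
    · simp
    · push_cast; exact hg _ (by omega)
    · exact htop.comp (tendsto_natCast_atTop_atTop.atTop_add tendsto_const_nhds)
  have hneg : HasSum (fun n : ℕ => g (-(n + 1)) - g (-(n + 1) + 1)) (-g 0) := by
    convert hasSum_sub_succ_of_antitone (g := fun n : ℕ => -g (-n))
      (antitone_nat_of_succ_le fun n => ?_) ?_ using 1
    · ext n; push_cast; ring_nf
    · simp
    · push_cast; simpa using hg (-(n + 1)) (by omega)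
    · simpa using (hbot.comp (tendsto_neg_atTop_atBot.comp tendsto_natCast_atTop_atTop)).neg
  have hnat : HasSum (fun n : ℕ => g n - g (n + 1)) (g 0) := by
    refine (hasSum_nat_add_iff' 1).mp ?_
    simpa [Finset.sum_range_one] using hpos
  simpa using HasSum.of_nat_of_neg_add_one (f := fun j : ℤ => g j - g (j + 1)) hnat hneg

noncomputable def gaussMap (p x : ℝ) : ℝ := if x = 0 then 0 else p * frac2 (-p / x)

noncomputable def gaussDigit (p x : ℝ) : ℤ := ⌈(-p / x - 1) / 2⌉

noncomputable def gaussBranch (p : ℝ) (j : ℤ) (t : ℝ) : ℝ := -p ^ 2 / (t + 2 * p * j)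

noncomputable def gaussMeasure (p : ℝ) : Measure ℝ :=
  (volume.restrict (Ioc (-p) p)).withDensity fun x => ENNReal.ofReal (1 / (p ^ 2 - x ^ 2))

section

variable {p : ℝ}

lemma measurable_gaussMap : Measurable (gaussMap p) := by
  unfold gaussMap
  exact measurable_const.ite (measurableSet_singleton 0)
    (measurable_const.mul (measurable_frac2.comp (measurable_const.div measurable_id)))

lemma measurable_gaussDigit : Measurable (gaussDigit p) := by
  unfold gaussDigit; fun_prop

lemma gaussMap_mem_Ioc (hp : 0 < p) (x : ℝ) : gaussMap p x ∈ Ioc (-p) p := by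
  unfold gaussMap
  split_ifs
  · exact ⟨by linarith, hp.le⟩
  · obtain ⟨h₁, h₂⟩ := frac2_mem_Ioc (-p / x)
    exact ⟨by nlinarith, by nlinarith⟩

lemma gaussDigit_eq_zero_iff (hp : 0 < p) {x : ℝ} :
    gaussDigit p x = 0 ↔ x ∉ Ioc (-p) p \ {0} := by
  rw [gaussDigit, ceil_sub_one_div_two_eq_iff, Int.cast_zero, mul_zero, sub_zero,
    neg_div_mem_Ioc_iff hp]

lemma preimage_gaussDigit_compl_zero (hp : 0 < p) :
    gaussDigit p ⁻¹' {0}ᶜ = Ioc (-p) p \ {0} := by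
  ext x
  simp [gaussDigit_eq_zero_iff hp, and_assoc]

lemma neg_div_gaussBranch (hp : p ≠ 0) (j : ℤ) (t : ℝ) :
    -p / gaussBranch p j t = t / p + 2 * j := by
  rw [gaussBranch, div_div_eq_mul_div]
  field_simp

lemma gaussDigit_gaussBranch (hp : 0 < p) {j : ℤ} {t : ℝ} (ht : t ∈ Ioc (-p) p) :
    gaussDigit p (gaussBranch p j t) = j := by
  rw [gaussDigit, neg_div_gaussBranch hp.ne', ceil_sub_one_div_two_eq_iff, add_sub_cancel_right]
  exact div_mem_Ioc_neg_one_one hp ht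

lemma ne_zero_of_gaussDigit_ne_zero (hp : 0 < p) {x : ℝ} (hx : gaussDigit p x ≠ 0) : x ≠ 0 :=
  (not_not.mp (mt (gaussDigit_eq_zero_iff hp).mpr hx)).2

lemma gaussMap_gaussBranch (hp : 0 < p) {j : ℤ} (hj : j ≠ 0) {t : ℝ} (ht : t ∈ Ioc (-p) p) :
    gaussMap p (gaussBranch p j t) = t := by
  have hx := ne_zero_of_gaussDigit_ne_zero hp ((gaussDigit_gaussBranch hp ht).trans_ne hj)
  have hfrac : t / p + 2 * j - 2 * j ∈ Ioc (-1) 1 := by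
    rw [add_sub_cancel_right]
    exact div_mem_Ioc_neg_one_one hp ht
  rw [gaussMap, if_neg hx, neg_div_gaussBranch hp.ne', frac2_eq_sub hfrac, add_sub_cancel_right,
    mul_div_cancel₀ _ hp.ne']

lemma image_gaussBranch (hp : 0 < p) {j : ℤ} (hj : j ≠ 0) :
    gaussBranch p j '' Ioc (-p) p = gaussDigit p ⁻¹' {j} := by
  refine Subset.antisymm (image_subset_iff.2 fun t ht => gaussDigit_gaussBranch hp ht)
    fun x hx => ?_
  have hxj : gaussDigit p x = j := hx
  have hx0 := ne_zero_of_gaussDigit_ne_zero hp (hxj.trans_ne hj)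
  have hp' : -p ≠ 0 := neg_ne_zero.mpr hp.ne'
  refine ⟨gaussMap p x, gaussMap_mem_Ioc hp x, ?_⟩
  have key : -p / gaussBranch p j (gaussMap p x) = -p / x := by
    rw [neg_div_gaussBranch hp.ne', gaussMap, if_neg hx0, frac2, ← hxj, gaussDigit]
    field_simp
    ring
  rw [← div_div_cancel₀ (b := gaussBranch p j _) hp', key, div_div_cancel₀ hp']

lemma hasDerivAt_gaussBranch {j : ℤ} {t : ℝ} (hd : t + 2 * p * j ≠ 0) :
    HasDerivAt (gaussBranch p j) (p ^ 2 / (t + 2 * p * j) ^ 2) t :=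
  ((hasDerivAt_const t (-p ^ 2)).div ((hasDerivAt_id t).add_const _) hd).congr_deriv (by simp)

lemma sq_div_sq_mul_one_div_sub_gaussBranch_sq (hp : p ≠ 0) {j : ℤ} {t : ℝ}
    (hd : t + 2 * p * j ≠ 0) :
    p ^ 2 / (t + 2 * p * j) ^ 2 * (1 / (p ^ 2 - gaussBranch p j t ^ 2))
      = 1 / ((t + 2 * p * j) ^ 2 - p ^ 2) := by
  rw [gaussBranch]
  set d := t + 2 * p * j
  have : p ^ 2 - (-p ^ 2 / d) ^ 2 = p ^ 2 * (d ^ 2 - p ^ 2) / d ^ 2 := by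
    field_simp
  rw [this, one_div_div, div_mul_div_comm, mul_comm (p ^ 2) (d ^ 2),
    mul_div_mul_left _ _ (pow_ne_zero 2 hd), div_mul_cancel_left₀ (pow_ne_zero 2 hp), one_div]

lemma setLIntegral_preimage_gaussDigit (hp : 0 < p) {j : ℤ} (hj : j ≠ 0)
    (f : ℝ → ℝ≥0∞) :
    ∫⁻ x in gaussDigit p ⁻¹' {j}, ENNReal.ofReal (1 / (p ^ 2 - x ^ 2)) * f (gaussMap p x)
      = ∫⁻ t in Ioc (-p) p, ENNReal.ofReal (1 / ((t + 2 * p * j) ^ 2 - p ^ 2)) * f t := by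
  -- at a pole `gaussBranch` takes the junk value `0`, whose digit is `0`
  have hd : ∀ t ∈ Ioc (-p) p, t + 2 * p * j ≠ 0 := fun t ht hd =>
    ne_zero_of_gaussDigit_ne_zero hp ((gaussDigit_gaussBranch hp ht).trans_ne hj)
      (by rw [gaussBranch, hd, div_zero])
  have hinv : LeftInvOn (gaussMap p) (gaussBranch p j) (Ioc (-p) p) :=
    fun t ht => gaussMap_gaussBranch hp hj ht
  rw [← image_gaussBranch hp hj, lintegral_image_eq_lintegral_abs_deriv_mul measurableSet_Ioc
    (fun t ht => (hasDerivAt_gaussBranch (hd t ht)).hasDerivWithinAt) hinv.injOn]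
  refine setLIntegral_congr_fun measurableSet_Ioc fun t ht => ?_
  rw [hinv ht, ← mul_assoc, abs_of_nonneg (by positivity), ← ENNReal.ofReal_mul (by positivity),
    sq_div_sq_mul_one_div_sub_gaussBranch_sq hp.ne' (hd t ht)]

lemma sq_lt_sq_add_two_mul (hp : 0 < p) {t : ℝ} (ht : t ∈ Ioo (-p) p) {j : ℤ} (hj : j ≠ 0) :
    p ^ 2 < (t + 2 * p * j) ^ 2 := by
  obtain ⟨h₁, h₂⟩ := ht
  rcases hj.lt_or_gt with hj | hj
  · have : (j : ℝ) ≤ -1 := by exact_mod_cast Int.le_sub_one_of_lt hj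
    have : t + 2 * p * j < -p := by nlinarith
    nlinarith
  · have : (1 : ℝ) ≤ j := by exact_mod_cast hj
    have : p < t + 2 * p * j := by nlinarith
    nlinarith

lemma hasSum_one_div_add_two_mul_sq_sub_sq (hp : 0 < p) {t : ℝ} (ht : t ∈ Ioo (-p) p) :
    HasSum (fun j : ({0}ᶜ : Set ℤ) => 1 / ((t + 2 * p * j) ^ 2 - p ^ 2))
      (1 / (p ^ 2 - t ^ 2)) := by
  set F : ℤ → ℝ := fun j => 1 / ((t + 2 * p * j) ^ 2 - p ^ 2)
  set g : ℤ → ℝ := fun j => (2 * p)⁻¹ * (2 * p * j + (t - p))⁻¹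
  have hF : ∀ j, g j - g (j + 1) = F j := by
    intro j
    have hne : (t + 2 * p * j - p) * (t + 2 * p * j + p) ≠ 0 := by
      rcases eq_or_ne j 0 with rfl | hj
      · obtain ⟨h₁, h₂⟩ := ht
        simp only [Int.cast_zero, mul_zero, add_zero]
        exact mul_ne_zero (by linarith) (by linarith)
      · nlinarith [sq_lt_sq_add_two_mul hp ht hj]
    obtain ⟨h₁, h₂⟩ := mul_ne_zero_iff.mp hne
    simp only [g, F]
    push_cast
    rw [show 2 * p * (j + 1) + (t - p) = t + 2 * p * j + p by ring,
      show 2 * p * j + (t - p) = t + 2 * p * j - p by ring,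
      show (t + 2 * p * j) ^ 2 - p ^ 2 = (t + 2 * p * j - p) * (t + 2 * p * j + p) by ring]
    field_simp
    ring
  have h2p : 0 < 2 * p := by positivity
  have hlin : Tendsto (fun j : ℤ => 2 * p * j + (t - p)) atTop atTop :=
    tendsto_atTop_add_const_right _ _ (tendsto_intCast_atTop_atTop.const_mul_atTop h2p)
  have hlin' : Tendsto (fun j : ℤ => 2 * p * j + (t - p)) atBot atBot :=
    tendsto_atBot_add_const_right _ _
      ((tendsto_intCast_atBot_iff.mpr tendsto_id).const_mul_atBot h2p)
  have hsum : HasSum F 0 := by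
    rw [← funext hF]
    refine hasSum_int_sub_succ (fun j hj => sub_nonneg.mp ?_) ?_ ?_
    · rw [hF]; exact (one_div_pos.mpr (sub_pos.mpr (sq_lt_sq_add_two_mul hp ht hj))).le
    · simpa [g] using (tendsto_inv_atTop_zero.comp hlin).const_mul (2 * p)⁻¹
    · simpa [g] using (tendsto_inv_atBot_zero.comp hlin').const_mul (2 * p)⁻¹
  have hF0 : 1 / (p ^ 2 - t ^ 2) = 0 - F 0 := by
    simp only [F, Int.cast_zero, mul_zero, add_zero]
    rw [zero_sub, ← neg_sub (t ^ 2), div_neg]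
  rw [hF0]
  exact (hasSum_singleton 0 F).hasSum_iff_compl.mp hsum

lemma tsum_ofReal_one_div_add_two_mul_sq_sub_sq (hp : 0 < p) {t : ℝ} (ht : t ∈ Ioo (-p) p) :
    ∑' j : ({0}ᶜ : Set ℤ), ENNReal.ofReal (1 / ((t + 2 * p * j) ^ 2 - p ^ 2))
      = ENNReal.ofReal (1 / (p ^ 2 - t ^ 2)) := by
  have h := hasSum_one_div_add_two_mul_sq_sub_sq hp ht
  rw [← h.tsum_eq, ENNReal.ofReal_tsum_of_nonneg
    (fun j => (one_div_pos.mpr (sub_pos.mpr (sq_lt_sq_add_two_mul hp ht j.2))).le) h.summable]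

lemma lintegral_comp_gaussMap (hp : 0 < p) {f : ℝ → ℝ≥0∞} (hf : Measurable f) :
    ∫⁻ x, f (gaussMap p x) ∂gaussMeasure p = ∫⁻ x, f x ∂gaussMeasure p := by
  rw [gaussMeasure]
  set ρ : ℝ → ℝ≥0∞ := fun x => ENNReal.ofReal (1 / (p ^ 2 - x ^ 2))
  have hρ : Measurable ρ := by fun_prop
  have hcover : Ioc (-p) p \ {0} = ⋃ j : ({0}ᶜ : Set ℤ), gaussDigit p ⁻¹' {(j : ℤ)} := by
    rw [← preimage_gaussDigit_compl_zero hp]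
    ext
    simp
  have hdisj : Pairwise
      (Function.onFun Disjoint fun j : ({0}ᶜ : Set ℤ) => gaussDigit p ⁻¹' {(j : ℤ)}) :=
    (pairwise_disjoint_fiber _).comp_of_injective Subtype.val_injective
  rw [lintegral_withDensity_eq_lintegral_mul _ hρ (hf.fun_comp measurable_gaussMap),
    lintegral_withDensity_eq_lintegral_mul _ hρ hf]
  calc ∫⁻ x in Ioc (-p) p, ρ x * f (gaussMap p x)
      = ∫⁻ x in Ioc (-p) p \ {0}, ρ x * f (gaussMap p x) :=
        setLIntegral_congr (sdiff_null_ae_eq_self (measure_singleton 0)).symm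
    _ = ∑' j : ({0}ᶜ : Set ℤ),
          ∫⁻ x in gaussDigit p ⁻¹' {(j : ℤ)}, ρ x * f (gaussMap p x) := by
        rw [hcover, lintegral_iUnion (fun j => measurable_gaussDigit (measurableSet_singleton _))
          hdisj]
    _ = ∑' j : ({0}ᶜ : Set ℤ), ∫⁻ t in Ioc (-p) p,
          ENNReal.ofReal (1 / ((t + 2 * p * j) ^ 2 - p ^ 2)) * f t :=
        tsum_congr fun j => setLIntegral_preimage_gaussDigit hp j.2 f
    _ = ∫⁻ t in Ioc (-p) p, ∑' j : ({0}ᶜ : Set ℤ),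
          ENNReal.ofReal (1 / ((t + 2 * p * j) ^ 2 - p ^ 2)) * f t :=
        (lintegral_tsum fun j => by fun_prop).symm
    _ = ∫⁻ t in Ioc (-p) p, ρ t * f t := by
        rw [Measure.restrict_congr_set Ioo_ae_eq_Ioc.symm]
        refine setLIntegral_congr_fun measurableSet_Ioo fun t ht => ?_
        rw [ENNReal.tsum_mul_right, tsum_ofReal_one_div_add_two_mul_sq_sub_sq hp ht]

lemma map_gaussMap_gaussMeasure (hp : 0 < p) :
    (gaussMeasure p).map (gaussMap p) = gaussMeasure p :=
  Measure.ext_of_lintegral _ fun f hf => by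
    rw [lintegral_map hf measurable_gaussMap, lintegral_comp_gaussMap hp hf]

end

theorem stmt7_general (p : ℝ) (hp : 0 < p)
    (ω : Measure ℝ)
    (hω : ω = (volume.restrict (Set.Ioc (-p) p)).withDensity
      (fun x => ENNReal.ofReal (1 / (p ^ 2 - x ^ 2))))
    (U : ℝ → ℝ) (hU : ∀ x, U x = if x = 0 then 0 else p * frac2 (-p / x))
    (φ : ℝ → ℝ) (hmeas : Measurable φ) :
    ∫ x, φ (U x) ∂ω = ∫ x, φ x ∂ω := by
  obtain rfl : U = gaussMap p := funext hU
  obtain rfl : ω = gaussMeasure p := hω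
  rw [← integral_map measurable_gaussMap.aemeasurable hmeas.aestronglyMeasurable,
    map_gaussMap_gaussMeasure hp]

/-- The measure `dω(x) = dx/(p² - x²)` on `(-p, p]` is invariant under the Gauss-type
map `U(x) = p·{-p/x}₂`: for every bounded Borel `φ` continuous off a countable set,
`∫ φ∘U dω = ∫ φ dω`. -/
theorem stmt7 (p : ℝ) (hp : 0 < p)
    (ω : Measure ℝ)
    (hω : ω = (volume.restrict (Set.Ioc (-p) p)).withDensity
      (fun x => ENNReal.ofReal (1 / (p ^ 2 - x ^ 2))))
    (U : ℝ → ℝ) (hU : ∀ x, U x = if x = 0 then 0 else p * frac2 (-p / x))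
    (φ : ℝ → ℝ) (hmeas : Measurable φ) (hbdd : ∃ C, ∀ x, |φ x| ≤ C)
    (hcont : ∃ D : Set ℝ, D.Countable ∧ ContinuousOn φ (Set.Ioc (-p) p \ D)) :
    ∫ x, φ (U x) ∂ω = ∫ x, φ x ∂ω :=
  stmt7_general p hp ω hω U hU φ hmeas
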